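/- Let C be an exact inverse category and f : A → B a morphism of C. Then: (i) the inverse image function P′(f) : P(B) → P(A) is injective if and only if f is an epimorphism, and surjective if and only if f is a monomorphism; (ii) P′(f)(0_B) = f′ and P′(f)(1_B) = 1_A; (iii) P′(f)(f ∘ f*) = 1_A. -/

import Mathlib

/-!
In an inverse category idempotents commute, so an idempotent `e` is determined by the morphisms
`x` with `x ≫ e = x`. Exactness makes every projection closed (`j′′ = j`), which turns this into
`x ≫ P′(f)(j) = x ↔ x ≫ f ≫ j = x ≫ f`. As `f` is epi iff `f* ≫ f = 1` and mono iff
`f ≫ f* = 1`, one recovers `j` from `P′(f)(j)` when `f` is epi, and realises any `i` as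
`P′(f)(f* ≫ i ≫ f)` when `f` is mono. Conversely `P′(f)(f ∘ f*) = 1 = P′(f)(1)`, and a
preimage of `0` forces `f′ = 0`, hence `f ≫ f* = 1`.
-/

open CategoryTheory CategoryTheory.Limits

universe v u

/-- An operation assigning to each morphism a morphism in the opposite direction. -/
def MorphismOp (C : Type u) [Category.{v} C] : Type (max u v) :=
  ∀ {A B : C}, (A ⟶ B) → (B ⟶ A)

variable {C : Type u} [Category.{v} C]

/-- `s` is an involution: a contravariant endofunctor which is the identity on objects
and involutive on morphisms. -/
def IsInvolution (s : MorphismOp C) : Prop :=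
  (∀ {A B D : C} (f : A ⟶ B) (g : B ⟶ D), s (f ≫ g) = s g ≫ s f) ∧
  (∀ A : C, s (𝟙 A) = 𝟙 A) ∧
  (∀ {A B : C} (f : A ⟶ B), s (s f) = f)

/-- A projection on `A` is an idempotent endomorphism fixed by the involution `s`. -/
def IsProjection (s : MorphismOp C) {A : C} (i : A ⟶ A) : Prop :=
  i ≫ i = i ∧ s i = i

/-- `g` is a Moore–Penrose generalized inverse of `f` with respect to `s`:
`f g f = f`, `g f g = g`, `(f g)* = f g`, `(g f)* = g f`. -/
def IsMoorePenrose (s : MorphismOp C) {A B : C} (f : A ⟶ B) (g : B ⟶ A) : Prop :=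
  f ≫ g ≫ f = f ∧ g ≫ f ≫ g = g ∧ s (f ≫ g) = f ≫ g ∧ s (g ≫ f) = g ≫ f

/-- `inv` makes `C` an inverse category: each morphism `f` has `inv f` as its unique
generalized inverse (`f ∘ (inv f) ∘ f = f` and `(inv f) ∘ f ∘ (inv f) = inv f`). -/
def IsInverseOp (inv : MorphismOp C) : Prop :=
  ∀ {A B : C} (f : A ⟶ B),
    (f ≫ inv f ≫ f = f ∧ inv f ≫ f ≫ inv f = inv f) ∧
    ∀ g : B ⟶ A, f ≫ g ≫ f = f → g ≫ f ≫ g = g → g = inv f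

/-- `u` is a kernel of `f`. -/
def IsKernelOf [HasZeroMorphisms C] {K A B : C} (u : K ⟶ A) (f : A ⟶ B) : Prop :=
  u ≫ f = 0 ∧ ∀ {X : C} (g : X ⟶ A), g ≫ f = 0 → ∃! h : X ⟶ K, h ≫ u = g

/-- `v` is a cokernel of `f`. -/
def IsCokernelOf [HasZeroMorphisms C] {A B Q : C} (v : B ⟶ Q) (f : A ⟶ B) : Prop :=
  f ≫ v = 0 ∧ ∀ {X : C} (g : B ⟶ X), f ≫ g = 0 → ∃! h : Q ⟶ X, v ≫ h = g

/-- An exact category (in the sense of the paper): a category with a zero object,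
kernels and cokernels, in which every monomorphism is a kernel, every epimorphism is a
cokernel, and every morphism factors as a monomorphism composed with an epimorphism. -/
structure IsExactCategory (C : Type u) [Category.{v} C] [HasZeroObject C]
    [HasZeroMorphisms C] : Prop where
  hasKernels : ∀ {A B : C} (f : A ⟶ B), ∃ (K : C) (u : K ⟶ A), IsKernelOf u f
  hasCokernels : ∀ {A B : C} (f : A ⟶ B), ∃ (Q : C) (v : B ⟶ Q), IsCokernelOf v f
  normal : ∀ {X A : C} (u : X ⟶ A), Mono u → ∃ (B : C) (f : A ⟶ B), IsKernelOf u f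
  conormal : ∀ {A B : C} (v : A ⟶ B), Epi v → ∃ (X : C) (f : X ⟶ A), IsCokernelOf v f
  monoEpiFact : ∀ {A B : C} (f : A ⟶ B),
    ∃ (I : C) (q : A ⟶ I) (p : I ⟶ B), Epi q ∧ Mono p ∧ q ≫ p = f

/-- A Baer*-structure on `C` with respect to `s`: each morphism `f` has a projection
`f′ = prj f` on its domain with `f ∘ g = 0` iff `g` factors through `f′`. -/
structure BaerStar (C : Type u) [Category.{v} C] [HasZeroObject C] [HasZeroMorphisms C]
    (s : MorphismOp C) where
  prj : ∀ {A B : C}, (A ⟶ B) → (A ⟶ A)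
  prj_isProjection : ∀ {A B : C} (f : A ⟶ B), IsProjection s (prj f)
  prj_spec : ∀ {A B X : C} (f : A ⟶ B) (g : X ⟶ A),
    g ≫ f = 0 ↔ ∃ h : X ⟶ A, g = h ≫ prj f

/-- The natural partial order on projections: `e ≤ f` iff `e = e ∘ f`. -/
def ProjLe {A : C} (e f : A ⟶ A) : Prop := f ≫ e = e

/-- `p` is the image of `g`: the smallest subobject of the codomain of `g` through
which `g` factors. -/
def IsImageOf {A B I : C} (p : I ⟶ B) (g : A ⟶ B) : Prop :=
  Mono p ∧ (∃ t : A ⟶ I, t ≫ p = g) ∧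
  ∀ {S : C} (t : A ⟶ S) (m : S ⟶ B), Mono m → t ≫ m = g → ∃ w : I ⟶ S, w ≫ m = p

-- `hj.2` is stated about the eta-expanded `fun {A B} => inv`, which `rw` does not match.
theorem IsProjection.inv_eq {inv : MorphismOp C} {A : C} {j : A ⟶ A}
    (hj : IsProjection inv j) : inv j = j :=
  hj.2

namespace IsInverseOp

variable {inv : MorphismOp C}

theorem comp_inv_comp (hinv : IsInverseOp inv) {A B : C} (f : A ⟶ B) : f ≫ inv f ≫ f = f :=
  (hinv f).1.1

theorem inv_comp_inv (hinv : IsInverseOp inv) {A B : C} (f : A ⟶ B) :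
    inv f ≫ f ≫ inv f = inv f :=
  (hinv f).1.2

theorem eq_inv (hinv : IsInverseOp inv) {A B : C} {f : A ⟶ B} {g : B ⟶ A}
    (h₁ : f ≫ g ≫ f = f) (h₂ : g ≫ f ≫ g = g) : g = inv f :=
  (hinv f).2 g h₁ h₂

theorem inv_inv (hinv : IsInverseOp inv) {A B : C} (f : A ⟶ B) : inv (inv f) = f :=
  (hinv.eq_inv (hinv.inv_comp_inv f) (hinv.comp_inv_comp f)).symm

theorem inv_eq_self_of_idem (hinv : IsInverseOp inv) {A : C} {e : A ⟶ A} (he : e ≫ e = e) :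
    inv e = e :=
  (hinv.eq_inv (by rw [he, he]) (by rw [he, he])).symm

theorem isProjection_of_idem (hinv : IsInverseOp inv) {A : C} {e : A ⟶ A} (he : e ≫ e = e) :
    IsProjection inv e :=
  ⟨he, hinv.inv_eq_self_of_idem he⟩

theorem comp_inv_idem (hinv : IsInverseOp inv) {A B : C} (f : A ⟶ B) :
    (f ≫ inv f) ≫ f ≫ inv f = f ≫ inv f := by
  rw [Category.assoc, hinv.inv_comp_inv]

theorem inv_comp_idem (hinv : IsInverseOp inv) {A B : C} (f : A ⟶ B) :
    (inv f ≫ f) ≫ inv f ≫ f = inv f ≫ f := by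
  rw [Category.assoc, hinv.comp_inv_comp]

/-- With `x = inv (e ≫ f)`, also `f ≫ x ≫ e` is a generalized inverse of `e ≫ f`, so it equals
`x`; this makes `x`, and hence its inverse `e ≫ f`, idempotent. -/
theorem comp_idem_of_idem (hinv : IsInverseOp inv) {A : C} {e f : A ⟶ A} (he : e ≫ e = e)
    (hf : f ≫ f = f) : (e ≫ f) ≫ e ≫ f = e ≫ f := by
  set x := inv (e ≫ f)
  have hx₁ : e ≫ f ≫ x ≫ e ≫ f = e ≫ f := by simpa using hinv.comp_inv_comp (e ≫ f)
  have hx₂ : x ≫ e ≫ f ≫ x = x := by simpa using hinv.inv_comp_inv (e ≫ f)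
  have hfxe : f ≫ x ≫ e = x := hinv.eq_inv
    (by simp only [Category.assoc, reassoc_of% hf, reassoc_of% he, hx₁])
    (by simp only [Category.assoc, reassoc_of% hf, reassoc_of% he, reassoc_of% hx₂])
  have hxx : x ≫ x = x :=
    calc x ≫ x = (f ≫ x ≫ e) ≫ f ≫ x ≫ e := by rw [hfxe]
      _ = f ≫ (x ≫ e ≫ f ≫ x) ≫ e := by simp only [Category.assoc]
      _ = x := by rw [hx₂, hfxe]
  have hefx : e ≫ f = x := by rw [← hinv.inv_eq_self_of_idem hxx, hinv.inv_inv]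
  rw [hefx, hxx]

theorem idem_comm (hinv : IsInverseOp inv) {A : C} {e f : A ⟶ A} (he : e ≫ e = e)
    (hf : f ≫ f = f) : e ≫ f = f ≫ e := by
  have hef := hinv.comp_idem_of_idem he hf
  have hfe := hinv.comp_idem_of_idem hf he
  refine (hinv.eq_inv (f := e ≫ f) ?_ ?_).trans (hinv.inv_eq_self_of_idem hef) |>.symm
  · simpa only [Category.assoc, reassoc_of% hf, reassoc_of% he] using hef
  · simpa only [Category.assoc, reassoc_of% hf, reassoc_of% he] using hfe

theorem eq_of_forall_comp_eq_self_iff (hinv : IsInverseOp inv) {A : C} {e e' : A ⟶ A}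
    (he : e ≫ e = e) (he' : e' ≫ e' = e')
    (h : ∀ {X : C} (x : X ⟶ A), x ≫ e = x ↔ x ≫ e' = x) : e = e' := by
  rw [← (h e).mp he, hinv.idem_comm he he', (h e').mpr he']

theorem inv_comp (hinv : IsInverseOp inv) {A B D : C} (f : A ⟶ B) (g : B ⟶ D) :
    inv (f ≫ g) = inv g ≫ inv f := by
  have hc := hinv.idem_comm (hinv.comp_inv_idem g) (hinv.inv_comp_idem f)
  refine (hinv.eq_inv ?_ ?_).symm
  · simp only [Category.assoc] at hc ⊢
    rw [reassoc_of% hc, reassoc_of% (hinv.comp_inv_comp f), hinv.comp_inv_comp g]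
  · simp only [Category.assoc] at hc ⊢
    rw [reassoc_of% hc.symm, reassoc_of% (hinv.inv_comp_inv g), hinv.inv_comp_inv f]

theorem inv_zero [HasZeroMorphisms C] (hinv : IsInverseOp inv) {A B : C} :
    inv (0 : A ⟶ B) = 0 :=
  (hinv.eq_inv (by simp) (by simp)).symm

theorem comp_eq_zero_iff_inv_comp [HasZeroMorphisms C] (hinv : IsInverseOp inv) {A B D : C}
    (f : A ⟶ B) (g : B ⟶ D) : f ≫ g = 0 ↔ inv g ≫ inv f = 0 := by
  constructor
  · intro h
    rw [← hinv.inv_comp, h, hinv.inv_zero]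
  · intro h
    rw [← hinv.inv_inv f, ← hinv.inv_inv g, ← hinv.inv_comp, h, hinv.inv_zero]

theorem mono_iff (hinv : IsInverseOp inv) {A B : C} (f : A ⟶ B) : Mono f ↔ f ≫ inv f = 𝟙 A :=
  ⟨fun _ ↦ by rw [← cancel_mono f, Category.assoc, hinv.comp_inv_comp, Category.id_comp],
    fun h ↦ (SplitMono.mk (inv f) h).mono⟩

theorem epi_iff (hinv : IsInverseOp inv) {A B : C} (f : A ⟶ B) : Epi f ↔ inv f ≫ f = 𝟙 B :=
  ⟨fun _ ↦ by rw [← cancel_epi f, hinv.comp_inv_comp, Category.comp_id],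
    fun h ↦ (SplitEpi.mk (inv f) h).epi⟩

end IsInverseOp

/-- Write the idempotent `j = q ≫ p` with `q` epi and `p` mono, so that `p ≫ q = 𝟙`; as `q` is a
cokernel of some `f₁`, which factors through the kernel `u` of `j`, every `g` killing `u` factors
through `q`. -/
theorem IsExactCategory.idem_comp_eq_self_of_kernel_comp_eq_zero [HasZeroObject C]
    [HasZeroMorphisms C] (hC : IsExactCategory C) {K B X : C} {j : B ⟶ B} (hj : j ≫ j = j)
    {u : K ⟶ B} (hu : IsKernelOf u j) {g : B ⟶ X} (hg : u ≫ g = 0) : j ≫ g = g := by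
  obtain ⟨I, q, p, hq, hp, rfl⟩ := hC.monoEpiFact j
  have hpq : p ≫ q = 𝟙 I := by
    rw [← cancel_mono p, ← cancel_epi q]
    simpa only [Category.assoc, Category.id_comp] using hj
  obtain ⟨X₀, f₁, hf₁⟩ := hC.conormal q hq
  obtain ⟨h₀, hh₀, -⟩ := hu.2 f₁ (by rw [← Category.assoc, hf₁.1, zero_comp])
  obtain ⟨g', rfl, -⟩ := hf₁.2 g (by rw [← hh₀, Category.assoc, hg, comp_zero])
  simp only [Category.assoc, reassoc_of% hpq]

namespace BaerStar

variable [HasZeroObject C] [HasZeroMorphisms C] {inv : MorphismOp C} (Bs : BaerStar C inv)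

theorem prj_comp_self {A B : C} (f : A ⟶ B) : Bs.prj f ≫ f = 0 :=
  (Bs.prj_spec f (Bs.prj f)).mpr ⟨𝟙 A, (Category.id_comp _).symm⟩

theorem comp_eq_zero_iff {A B X : C} (f : A ⟶ B) (g : X ⟶ A) :
    g ≫ f = 0 ↔ g ≫ Bs.prj f = g := by
  constructor
  · intro h
    obtain ⟨h', rfl⟩ := (Bs.prj_spec f g).mp h
    rw [Category.assoc, (Bs.prj_isProjection f).1]
  · intro h
    rw [← h, Category.assoc, Bs.prj_comp_self, comp_zero]

theorem prj_zero {A B : C} : Bs.prj (0 : A ⟶ B) = 𝟙 A := by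
  simpa using (Bs.comp_eq_zero_iff (0 : A ⟶ B) (𝟙 A)).mp comp_zero

theorem prj_id {B : C} : Bs.prj (𝟙 B) = 0 := by
  simpa using Bs.prj_comp_self (𝟙 B)

theorem comp_prj_self_of_isProjection (hinv : IsInverseOp inv) {B : C} {j : B ⟶ B}
    (hj : IsProjection inv j) : j ≫ Bs.prj j = 0 := by
  rw [hinv.comp_eq_zero_iff_inv_comp, (Bs.prj_isProjection j).inv_eq, hj.inv_eq, Bs.prj_comp_self]

/-- In an exact inverse category every projection is closed: `j = j′′`. -/
theorem comp_prj_eq_zero_iff (hinv : IsInverseOp inv) (hC : IsExactCategory C) {B X : C}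
    {j : B ⟶ B} (hj : IsProjection inv j) (x : X ⟶ B) : x ≫ Bs.prj j = 0 ↔ x ≫ j = x := by
  refine ⟨fun h ↦ ?_, fun h ↦ by rw [← h, Category.assoc, Bs.comp_prj_self_of_isProjection hinv hj,
    comp_zero]⟩
  obtain ⟨K, u, hu⟩ := hC.hasKernels j
  have hu_prj : u ≫ Bs.prj j = u := (Bs.comp_eq_zero_iff j u).mp hu.1
  have hx_inv_u : x ≫ inv u = 0 := by
    rw [← hu_prj, hinv.inv_comp, (Bs.prj_isProjection j).inv_eq, reassoc_of% h, zero_comp]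
  have hu_inv_x : u ≫ inv x = 0 := by
    rwa [hinv.comp_eq_zero_iff_inv_comp, hinv.inv_inv]
  have hj_inv_x : j ≫ inv x = inv x :=
    hC.idem_comp_eq_self_of_kernel_comp_eq_zero hj.1 hu hu_inv_x
  rw [← hinv.inv_inv (x ≫ j), hinv.inv_comp, hj.inv_eq, hj_inv_x, hinv.inv_inv]

theorem mono_of_prj_eq_zero (hinv : IsInverseOp inv) (hC : IsExactCategory C) {A B : C}
    (f : A ⟶ B) (hf : Bs.prj f = 0) : Mono f := by
  have he : IsProjection inv (f ≫ inv f) := hinv.isProjection_of_idem (hinv.comp_inv_idem f)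
  have hprj : Bs.prj (f ≫ inv f) = 0 := by
    have hker : Bs.prj (f ≫ inv f) ≫ f = 0 :=
      calc Bs.prj (f ≫ inv f) ≫ f = (Bs.prj (f ≫ inv f) ≫ f ≫ inv f) ≫ f := by
            rw [Category.assoc, Category.assoc, hinv.comp_inv_comp]
        _ = 0 := by rw [Bs.prj_comp_self, zero_comp]
    rw [← (Bs.comp_eq_zero_iff f _).mp hker, hf, comp_zero]
  rw [hinv.mono_iff, ← Category.id_comp (f ≫ inv f)]
  exact (Bs.comp_prj_eq_zero_iff hinv hC he (𝟙 A)).mp (by rw [hprj, comp_zero])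

/-- The inverse image map `P′(f) : j ↦ (j′ ∘ f)′` on projections. -/
def inverseImage {A B : C} (f : A ⟶ B) (j : B ⟶ B) : A ⟶ A := Bs.prj (f ≫ Bs.prj j)

theorem inverseImage_idem {A B : C} (f : A ⟶ B) (j : B ⟶ B) :
    Bs.inverseImage f j ≫ Bs.inverseImage f j = Bs.inverseImage f j :=
  (Bs.prj_isProjection _).1

theorem comp_inverseImage_eq_self_iff (hinv : IsInverseOp inv) (hC : IsExactCategory C)
    {A B X : C} (f : A ⟶ B) {j : B ⟶ B} (hj : IsProjection inv j) (x : X ⟶ A) :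
    x ≫ Bs.inverseImage f j = x ↔ x ≫ f ≫ j = x ≫ f := by
  rw [inverseImage, ← Bs.comp_eq_zero_iff, ← Category.assoc, Bs.comp_prj_eq_zero_iff hinv hC hj,
    Category.assoc]

theorem inverseImage_zero {A B : C} (f : A ⟶ B) : Bs.inverseImage f 0 = Bs.prj f := by
  rw [inverseImage, prj_zero, Category.comp_id]

theorem inverseImage_id {A B : C} (f : A ⟶ B) : Bs.inverseImage f (𝟙 B) = 𝟙 A := by
  rw [inverseImage, prj_id, comp_zero, prj_zero]

theorem inverseImage_inv_comp_self (hinv : IsInverseOp inv) {A B : C} (f : A ⟶ B) :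
    Bs.inverseImage f (inv f ≫ f) = 𝟙 A := by
  have hp : Bs.prj (inv f ≫ f) ≫ inv f = 0 :=
    calc Bs.prj (inv f ≫ f) ≫ inv f = (Bs.prj (inv f ≫ f) ≫ inv f ≫ f) ≫ inv f := by
          rw [Category.assoc, Category.assoc, hinv.inv_comp_inv]
      _ = 0 := by rw [Bs.prj_comp_self, zero_comp]
  have hf : f ≫ Bs.prj (inv f ≫ f) = 0 := by
    rwa [hinv.comp_eq_zero_iff_inv_comp, (Bs.prj_isProjection _).inv_eq]
  rw [inverseImage, hf, prj_zero]

theorem inverseImage_injective_iff (hinv : IsInverseOp inv) (hC : IsExactCategory C) {A B : C}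
    (f : A ⟶ B) :
    (∀ j₁ j₂ : B ⟶ B, IsProjection inv j₁ → IsProjection inv j₂ →
      Bs.inverseImage f j₁ = Bs.inverseImage f j₂ → j₁ = j₂) ↔ Epi f := by
  rw [hinv.epi_iff]
  constructor
  · intro hinj
    refine hinj _ _ (hinv.isProjection_of_idem (hinv.inv_comp_idem f))
      (hinv.isProjection_of_idem (Category.id_comp _)) ?_
    rw [Bs.inverseImage_inv_comp_self hinv, inverseImage_id]
  · intro hf j₁ j₂ hj₁ hj₂ hj
    have hfix : ∀ {j : B ⟶ B}, IsProjection inv j → ∀ {X : C} (x : X ⟶ B),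
        x ≫ j = x ↔ (x ≫ inv f) ≫ Bs.inverseImage f j = x ≫ inv f := by
      intro j hj X x
      rw [Bs.comp_inverseImage_eq_self_iff hinv hC f hj, Category.assoc, Category.assoc,
        reassoc_of% hf, hf, Category.comp_id]
    refine hinv.eq_of_forall_comp_eq_self_iff hj₁.1 hj₂.1 fun x ↦ ?_
    rw [hfix hj₁, hfix hj₂, hj]

theorem inverseImage_surjective_iff (hinv : IsInverseOp inv) (hC : IsExactCategory C) {A B : C}
    (f : A ⟶ B) :
    (∀ i : A ⟶ A, IsProjection inv i →
      ∃ j : B ⟶ B, IsProjection inv j ∧ Bs.inverseImage f j = i) ↔ Mono f := by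
  constructor
  · intro hsurj
    obtain ⟨j, hj, hj0⟩ := hsurj 0 (hinv.isProjection_of_idem zero_comp)
    refine Bs.mono_of_prj_eq_zero hinv hC f ?_
    have := (Bs.comp_inverseImage_eq_self_iff hinv hC f hj (Bs.prj f)).mpr
      (by rw [← Category.assoc, Bs.prj_comp_self, zero_comp])
    rwa [hj0, comp_zero, eq_comm] at this
  · intro hmono i hi
    have hf := (hinv.mono_iff f).mp hmono
    have hj : IsProjection inv (inv f ≫ i ≫ f) := hinv.isProjection_of_idem (by
      simp only [Category.assoc, reassoc_of% hf, reassoc_of% hi.1])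
    refine ⟨_, hj, hinv.eq_of_forall_comp_eq_self_iff (Bs.inverseImage_idem f _) hi.1
      fun x ↦ ?_⟩
    rw [Bs.comp_inverseImage_eq_self_iff hinv hC f hj, reassoc_of% hf, ← Category.assoc,
      cancel_mono]

end BaerStar

/-- In an exact inverse category: (i) `P′(f)` is injective iff `f` is
epi and surjective iff `f` is mono; (ii) `P′(f)(0) = f′` and `P′(f)(1) = 1`;
(iii) `P′(f)(f ∘ f*) = 1`, where `P′(f)(j) = (j′ ∘ f)′`. -/
theorem stmt14 [HasZeroObject C] [HasZeroMorphisms C] (inv : MorphismOp C)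
    (hinv : IsInverseOp inv) (hC : IsExactCategory C) (Bs : BaerStar C inv)
    {A B : C} (f : A ⟶ B) :
    ((∀ j₁ j₂ : B ⟶ B, IsProjection inv j₁ → IsProjection inv j₂ →
        Bs.prj (f ≫ Bs.prj j₁) = Bs.prj (f ≫ Bs.prj j₂) → j₁ = j₂) ↔ Epi f) ∧
    ((∀ i : A ⟶ A, IsProjection inv i →
        ∃ j : B ⟶ B, IsProjection inv j ∧ Bs.prj (f ≫ Bs.prj j) = i) ↔ Mono f) ∧
    Bs.prj (f ≫ Bs.prj (0 : B ⟶ B)) = Bs.prj f ∧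
    Bs.prj (f ≫ Bs.prj (𝟙 B)) = 𝟙 A ∧
    Bs.prj (f ≫ Bs.prj (inv f ≫ f)) = 𝟙 A :=
  ⟨Bs.inverseImage_injective_iff hinv hC f, Bs.inverseImage_surjective_iff hinv hC f,
    Bs.inverseImage_zero f, Bs.inverseImage_id f, Bs.inverseImage_inv_comp_self hinv f⟩
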